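/- Let n ≥ 2, α ∈ (0, n+1], and let j ≥ 1 be an integer. Let T_j : ℝ^{n+1} → ℝ^{n+1} be the linear map T_j(ξ'', σ, τ) = (2^j ξ'', σ, 2^{2j} τ) in the coordinates ℝ^{n−1} × ℝ × ℝ. For an α-dimensional measure μ on ℝ^{n+1}, define the measure μ_j by ∫ φ dμ_j = ∫ φ ∘ T_j dμ for continuous compactly supported φ. Then there is a constant C, depending only on n and α, such that for all x₀ ∈ ℝ^{n+1} and ρ > 0, μ_j(B(x₀,ρ)) ≤ C ⟨μ⟩_α min{ 2^{(n+1−2α)j}, 2^{(1−α)j}, 1 } ρ^α; in particular ⟨μ_j⟩_α ≤ C min{ 2^{(n+1−2α)j}, 2^{(1−α)j}, 1 } ⟨μ⟩_α. -/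

import Mathlib

/-!
`T_j` is the diagonal map with entries `2^{a_k}`, `a = (j, …, j, 0, 2j)`, so `T_j⁻¹ B(x₀, ρ)` lies
in a box with half-sides `ρ 2^{-a_k}`. For any scale `t` this box is covered by
`3^{n+1} 2^{Σ_k (t - a_k)⁺}` balls of radius `√(n+1) ρ 2^{-t}`, each of `μ`-mass at most
`⟨μ⟩_α (√(n+1) ρ 2^{-t})^α`. The scales `t = 0, j, 2j` give the factors `1`, `2^{(1-α)j}` and
`2^{(n+1-2α)j}`.
-/

open MeasureTheory Metric Complex Function Set
open scoped ENNReal NNReal Real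

noncomputable section

abbrev Ed (d : ℕ) : Type := EuclideanSpace ℝ (Fin d)

/-- Fourier transform `f̂(x) = ∫ e^{-i x·ξ} f(ξ) dξ`. -/
def FT {d : ℕ} (f : Ed d → ℂ) (x : Ed d) : ℂ :=
  ∫ ξ : Ed d, Complex.exp (-(Complex.I * ((inner ℝ x ξ : ℝ) : ℂ))) * f ξ

/-- Truncated light cone `Γ_R ⊆ ℝ^{n+1}`. -/
def cone (n : ℕ) (R : ℝ) : Set (Ed (n+1)) :=
  {ξ | Real.sqrt (∑ i : Fin n, (ξ i.castSucc)^2) = ξ (Fin.last n) ∧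
    R ≤ ξ (Fin.last n) ∧ ξ (Fin.last n) ≤ 2*R}

/-- `δ`-neighborhood `Γ_R(δ)`. -/
def coneN (n : ℕ) (R δ : ℝ) : Set (Ed (n+1)) :=
  {ξ | Metric.infDist ξ (cone n R) < δ}

/-- `⟨μ⟩_α = sup_{x,ρ>0} ρ^{-α} μ(B(x,ρ))`. -/
def fb (d : ℕ) (α : ℝ) (μ : Measure (Ed d)) : ℝ≥0∞ :=
  ⨆ (x : Ed d) (ρ : ℝ) (_ : 0 < ρ), ENNReal.ofReal (ρ ^ (-α)) * μ (Metric.ball x ρ)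

/-- `α`-dimensional measure: compactly supported Borel measure with
`μ(B(x,ρ)) ≤ C ρ^α`. -/
def IsAlphaDim (d : ℕ) (α : ℝ) (μ : Measure (Ed d)) : Prop :=
  (∃ K : Set (Ed d), IsCompact K ∧ μ Kᶜ = 0) ∧ fb d α μ < ⊤

/-- Angular support `𝒜supp f`. -/
def ASupp {d : ℕ} (f : Ed d → ℂ) : Set (Ed d) :=
  (fun ξ => ‖ξ‖⁻¹ • ξ) '' (Function.support f)

/-- Critical exponent `s(α,q,n)`, where `qi = 1/q`. -/
def sCrit (α qi : ℝ) (n : ℕ) : ℝ :=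
  if α ≤ 1 then max ((n:ℝ)/2 - α*qi) (((n:ℝ)+1)/4)
  else if α ≤ (n:ℝ) then
    max ((n:ℝ)/2 - α*qi) (max (((n:ℝ)+1)/4 + (1-α)*qi/2) (((n:ℝ)+2)/4 - α/4))
  else
    max ((n:ℝ)/2 - α*qi) (max (((n:ℝ)+1)/4 + ((n:ℝ)+1-2*α)*qi/2) (((n:ℝ)+1)/2 - α/2))

/-- Inhomogeneous Sobolev norm `‖f‖_{H^s} = ‖(1+|·|²)^{s/2} f̂‖_{L²}`. -/
def sobNorm {n : ℕ} (s : ℝ) (f : Ed n → ℂ) : ℝ≥0∞ :=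
  eLpNorm (fun ξ => (((1 + ‖ξ‖^2) ^ (s/2) : ℝ) : ℂ) * FT f ξ) 2 volume


/-- The anisotropic dilation `T_j(ξ'', σ, τ) = (2^j ξ'', σ, 2^{2j} τ)` on
`ℝ^{n+1} = ℝ^{n-1} × ℝ × ℝ`. -/
def Tdil (n j : ℕ) (x : Ed (n+1)) : Ed (n+1) :=
  WithLp.toLp 2 (fun k : Fin (n+1) => if (k : ℕ) < n - 1 then (2:ℝ)^j * x k
    else if (k : ℕ) = n - 1 then x k
    else (2:ℝ)^(2*j) * x k)

section DyadicScaling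

variable {d : ℕ} {α : ℝ}

def dyadicScale (a : Fin d → ℕ) (x : Ed d) : Ed d :=
  WithLp.toLp 2 fun k => (2 : ℝ) ^ a k * x k

theorem measurable_dyadicScale (a : Fin d → ℕ) : Measurable (dyadicScale a) := by
  unfold dyadicScale
  fun_prop

theorem measure_ball_le_fb (μ : Measure (Ed d)) (x : Ed d) {r : ℝ} (hr : 0 < r) :
    μ (ball x r) ≤ ENNReal.ofReal (r ^ α) * fb d α μ := by
  have h : ENNReal.ofReal (r ^ (-α)) * μ (ball x r) ≤ fb d α μ :=
    le_iSup₂_of_le x r (le_iSup_of_le hr le_rfl)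
  calc μ (ball x r) = ENNReal.ofReal (r ^ α) * (ENNReal.ofReal (r ^ (-α)) * μ (ball x r)) := by
        rw [← mul_assoc, ← ENNReal.ofReal_mul (by positivity), ← Real.rpow_add hr,
          add_neg_cancel, Real.rpow_zero, ENNReal.ofReal_one, one_mul]
    _ ≤ ENNReal.ofReal (r ^ α) * fb d α μ := by gcongr

theorem fb_le_of_measure_ball_le {ν : Measure (Ed d)} {K : ℝ} {c : ℝ≥0∞}
    (h : ∀ x ρ, 0 < ρ → ν (ball x ρ) ≤ ENNReal.ofReal (K * ρ ^ α) * c) :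
    fb d α ν ≤ ENNReal.ofReal K * c := by
  refine iSup₂_le fun x ρ => iSup_le fun hρ => ?_
  calc ENNReal.ofReal (ρ ^ (-α)) * ν (ball x ρ)
      ≤ ENNReal.ofReal (ρ ^ (-α)) * (ENNReal.ofReal (K * ρ ^ α) * c) := by gcongr; exact h x ρ hρ
    _ = ENNReal.ofReal K * c := by
      rw [← mul_assoc, ← ENNReal.ofReal_mul (by positivity), mul_left_comm, ← Real.rpow_add hρ,
        neg_add_cancel, Real.rpow_zero, mul_one]

theorem dist_le_sqrt_mul_of_forall_dist_le {x y : Ed d} {δ : ℝ} (hδ : 0 ≤ δ)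
    (h : ∀ k, dist (x k) (y k) ≤ δ) : dist x y ≤ √d * δ := by
  rw [EuclideanSpace.dist_eq]
  calc √(∑ k, dist (x k) (y k) ^ 2) ≤ √(∑ _k : Fin d, δ ^ 2) := by gcongr with k; exact h k
    _ = √d * δ := by simp [Real.sqrt_sq hδ]

theorem box_subset_biUnion_ball [NeZero d] (y L : Fin d → ℝ) {r : ℝ} (hr : 0 < r)
    (M : Fin d → ℕ) (hL : ∀ k, L k ≤ r * M k) :
    {ξ : Ed d | ∀ k, |ξ k - y k| ≤ L k} ⊆
      ⋃ m ∈ Fintype.piFinset fun k => Finset.Icc (-(M k : ℤ)) (M k),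
        ball (WithLp.toLp 2 fun k => y k + r * m k) (√d * r) := by
  intro ξ hξ
  set m : Fin d → ℤ := fun k => round ((ξ k - y k) / r)
  refine mem_biUnion (x := m) ?_ ?_
  · simp only [Finset.mem_coe, Fintype.mem_piFinset, Finset.mem_Icc]
    intro k
    have hM : |(ξ k - y k) / r| ≤ M k := by
      rw [abs_div, abs_of_pos hr, div_le_iff₀ hr]
      linarith [hξ k, hL k]
    have hlo : -((M k : ℤ) : ℝ) - 1 < m k := by
      have := sub_half_lt_round ((ξ k - y k) / r)
      push_cast
      linarith [(abs_le.mp hM).1]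
    have hhi : (m k : ℝ) < (M k : ℤ) + 1 := by
      have := round_le_add_half ((ξ k - y k) / r)
      push_cast
      linarith [(abs_le.mp hM).2]
    have hlo' : -(M k : ℤ) - 1 < m k := by exact_mod_cast hlo
    have hhi' : m k < (M k : ℤ) + 1 := by exact_mod_cast hhi
    omega
  · have hd : (0 : ℝ) < √d := Real.sqrt_pos.mpr (by simp [Nat.pos_of_neZero])
    rw [mem_ball]
    calc dist ξ _ ≤ √d * (r / 2) := by
          refine dist_le_sqrt_mul_of_forall_dist_le (by positivity) fun k => ?_
          have hk : ξ k - (y k + r * m k) = r * ((ξ k - y k) / r - m k) := by field_simp; ring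
          simp only [Real.dist_eq, hk, abs_mul, abs_of_pos hr]
          linarith [mul_le_mul_of_nonneg_left (abs_sub_round ((ξ k - y k) / r)) hr.le]
      _ < √d * r := by gcongr; linarith

theorem card_piFinset_Icc_neg (M : Fin d → ℕ) :
    (Fintype.piFinset fun k => Finset.Icc (-(M k : ℤ)) (M k)).card = ∏ k, (2 * M k + 1) := by
  rw [Fintype.card_piFinset]
  refine Finset.prod_congr rfl fun k _ => ?_
  rw [Int.card_Icc]
  omega

theorem measure_box_le [NeZero d] (μ : Measure (Ed d)) (y L : Fin d → ℝ) {r : ℝ} (hr : 0 < r)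
    (M : Fin d → ℕ) (hL : ∀ k, L k ≤ r * M k) :
    μ {ξ : Ed d | ∀ k, |ξ k - y k| ≤ L k} ≤
      (∏ k, (2 * M k + 1) : ℕ) * (ENNReal.ofReal ((√d * r) ^ α) * fb d α μ) := by
  have hR : 0 < √d * r := mul_pos (Real.sqrt_pos.mpr (by simp [Nat.pos_of_neZero])) hr
  calc μ {ξ : Ed d | ∀ k, |ξ k - y k| ≤ L k}
      ≤ μ (⋃ m ∈ Fintype.piFinset fun k => Finset.Icc (-(M k : ℤ)) (M k),
          ball (WithLp.toLp 2 fun k => y k + r * m k) (√d * r)) :=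
        measure_mono (box_subset_biUnion_ball y L hr M hL)
    _ ≤ ∑ m ∈ Fintype.piFinset fun k => Finset.Icc (-(M k : ℤ)) (M k),
          μ (ball (WithLp.toLp 2 fun k => y k + r * m k) (√d * r)) :=
        measure_biUnion_finset_le _ _
    _ ≤ ∑ _m ∈ Fintype.piFinset fun k => Finset.Icc (-(M k : ℤ)) (M k),
          ENNReal.ofReal ((√d * r) ^ α) * fb d α μ :=
        Finset.sum_le_sum fun m _ => measure_ball_le_fb μ _ hR
    _ = _ := by rw [Finset.sum_const, nsmul_eq_mul, card_piFinset_Icc_neg]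

theorem prod_two_mul_two_pow_add_one_le (e : Fin d → ℕ) :
    ∏ k, (2 * 2 ^ e k + 1) ≤ 3 ^ d * 2 ^ ∑ k, e k := by
  calc ∏ k, (2 * 2 ^ e k + 1) ≤ ∏ k, 3 * 2 ^ e k :=
        Finset.prod_le_prod' fun k _ => by linarith [Nat.one_le_two_pow (n := e k)]
    _ = 3 ^ d * 2 ^ ∑ k, e k := by
      rw [Finset.prod_mul_distrib, Finset.prod_const, Finset.card_univ, Fintype.card_fin,
        Finset.prod_pow_eq_pow_sum]

theorem dyadicScale_preimage_ball_subset (a : Fin d → ℕ) (x₀ : Ed d) (ρ : ℝ) :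
    dyadicScale a ⁻¹' ball x₀ ρ ⊆ {ξ | ∀ k, |ξ k - x₀ k / 2 ^ a k| ≤ ρ / 2 ^ a k} := by
  intro ξ hξ k
  have hpos : (0 : ℝ) < 2 ^ a k := by positivity
  have hk : |2 ^ a k * ξ k - x₀ k| ≤ ρ := by
    have hball : dist (dyadicScale a ξ) x₀ < ρ := hξ
    have hcoord : dist (dyadicScale a ξ k) (x₀ k) ≤ dist (dyadicScale a ξ) x₀ :=
      PiLp.dist_apply_le _ _ k
    rw [Real.dist_eq] at hcoord
    exact hcoord.trans hball.le
  have hdiv : ξ k - x₀ k / 2 ^ a k = (2 ^ a k * ξ k - x₀ k) / 2 ^ a k := by field_simp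
  rw [hdiv, abs_div, abs_of_pos hpos]
  exact div_le_div_of_nonneg_right hk hpos.le

theorem two_pow_mul_div_two_pow_rpow (N t : ℕ) {ρ : ℝ} (hρ : 0 ≤ ρ) (α : ℝ) :
    (2 : ℝ) ^ N * (ρ / 2 ^ t) ^ α = 2 ^ ((N : ℝ) - t * α) * ρ ^ α := by
  rw [Real.div_rpow hρ (by positivity), ← Real.rpow_natCast 2 t, ← Real.rpow_mul zero_le_two,
    Real.rpow_sub two_pos, Real.rpow_natCast]
  ring

theorem map_dyadicScale_ball_le [NeZero d] (μ : Measure (Ed d)) (a : Fin d → ℕ) (t : ℕ)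
    (x₀ : Ed d) {ρ : ℝ} (hρ : 0 < ρ) :
    μ.map (dyadicScale a) (ball x₀ ρ) ≤
      ENNReal.ofReal (3 ^ d * √d ^ α * 2 ^ (((∑ k, (t - a k) : ℕ) : ℝ) - t * α) * ρ ^ α) *
        fb d α μ := by
  have hr : 0 < ρ / 2 ^ t := by positivity
  have hL : ∀ k, ρ / 2 ^ a k ≤ ρ / 2 ^ t * (2 ^ (t - a k) : ℕ) := by
    intro k
    rw [div_mul_eq_mul_div, div_le_div_iff₀ (by positivity) (by positivity), mul_assoc]
    push_cast
    rw [← pow_add]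
    gcongr
    · exact one_le_two
    · omega
  calc μ.map (dyadicScale a) (ball x₀ ρ) = μ (dyadicScale a ⁻¹' ball x₀ ρ) :=
        Measure.map_apply (measurable_dyadicScale a) measurableSet_ball
    _ ≤ μ {ξ | ∀ k, |ξ k - x₀ k / 2 ^ a k| ≤ ρ / 2 ^ a k} :=
        measure_mono (dyadicScale_preimage_ball_subset a x₀ ρ)
    _ ≤ (∏ k, (2 * 2 ^ (t - a k) + 1) : ℕ) *
          (ENNReal.ofReal ((√d * (ρ / 2 ^ t)) ^ α) * fb d α μ) :=
        measure_box_le μ _ _ hr _ hL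
    _ ≤ (3 ^ d * 2 ^ ∑ k, (t - a k) : ℕ) *
          (ENNReal.ofReal ((√d * (ρ / 2 ^ t)) ^ α) * fb d α μ) := by
        gcongr
        exact prod_two_mul_two_pow_add_one_le _
    _ = _ := by
        rw [← mul_assoc, ← ENNReal.ofReal_natCast, ← ENNReal.ofReal_mul (by positivity),
          Real.mul_rpow (by positivity) hr.le]
        congr 2
        simp only [Nat.cast_mul, Nat.cast_pow, Nat.cast_ofNat]
        rw [mul_assoc (3 ^ d * √d ^ α), ← two_pow_mul_div_two_pow_rpow _ _ hρ.le]
        ring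

end DyadicScaling

def tdilExp (n j : ℕ) (k : Fin (n + 1)) : ℕ :=
  if (k : ℕ) < n - 1 then j else if (k : ℕ) = n - 1 then 0 else 2 * j

theorem tdil_eq_dyadicScale (n j : ℕ) : Tdil n j = dyadicScale (tdilExp n j) := by
  funext x
  ext k
  simp only [Tdil, dyadicScale, tdilExp]
  split_ifs <;> simp

theorem sum_sub_tdilExp (m j t : ℕ) :
    ∑ k : Fin (m + 2), (t - tdilExp (m + 1) j k) = m * (t - j) + t + (t - 2 * j) := by
  simp [Fin.sum_univ_castSucc, tdilExp]

theorem stmt19_general (n : ℕ) (hn : 2 ≤ n) (α : ℝ) :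
    ∃ C : ℝ, 0 < C ∧
      ∀ j : ℕ, 1 ≤ j →
      ∀ μ : Measure (Ed (n+1)), IsAlphaDim (n+1) α μ →
      ∀ μj : Measure (Ed (n+1)), μj = Measure.map (Tdil n j) μ →
      (∀ x₀ : Ed (n+1), ∀ ρ : ℝ, 0 < ρ →
        μj (Metric.ball x₀ ρ) ≤
          ENNReal.ofReal C * fb (n+1) α μ *
            ENNReal.ofReal
              (min ((2:ℝ) ^ (((n:ℝ)+1-2*α) * (j:ℝ)))
                (min ((2:ℝ) ^ ((1-α) * (j:ℝ))) 1) * ρ ^ α)) ∧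
      fb (n+1) α μj ≤
        ENNReal.ofReal
          (C * min ((2:ℝ) ^ (((n:ℝ)+1-2*α) * (j:ℝ)))
            (min ((2:ℝ) ^ ((1-α) * (j:ℝ))) 1)) * fb (n+1) α μ := by
  obtain ⟨m, rfl⟩ : ∃ m, n = m + 1 := ⟨n - 1, by omega⟩
  set C : ℝ := 3 ^ (m + 1 + 1) * √(m + 1 + 1 : ℕ) ^ α
  have hC : 0 < C := by positivity
  refine ⟨C, hC, fun j _ μ _ μj hμj => ?_⟩
  set q := min ((2:ℝ) ^ ((((m + 1 : ℕ) : ℝ) + 1 - 2 * α) * j)) (min ((2:ℝ) ^ ((1 - α) * j)) 1)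
  have hball : ∀ x₀ ρ, 0 < ρ →
      μj (ball x₀ ρ) ≤ ENNReal.ofReal (C * q * ρ ^ α) * fb (m + 1 + 1) α μ := by
    intro x₀ ρ hρ
    have scale (t : ℕ) (e : ℝ) (he : ((m * (t - j) + t + (t - 2 * j) : ℕ) : ℝ) - t * α = e) :
        μj (ball x₀ ρ) ≤ ENNReal.ofReal (C * 2 ^ e * ρ ^ α) * fb (m + 1 + 1) α μ := by
      rw [hμj, tdil_eq_dyadicScale, ← he, ← sum_sub_tdilExp]
      exact map_dyadicScale_ball_le μ _ t x₀ hρ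
    obtain hq | hq : q = 2 ^ ((((m + 1 : ℕ) : ℝ) + 1 - 2 * α) * j) ∨
        q = min ((2:ℝ) ^ ((1 - α) * j)) 1 := min_choice _ _
    · rw [hq]
      exact scale (2 * j) _ (by simp [two_mul]; ring)
    · rcases min_choice ((2:ℝ) ^ ((1 - α) * j)) 1 with hq' | hq' <;> rw [hq, hq']
      · exact scale j _ (by simp [two_mul]; ring)
      · simpa using scale 0 0 (by simp)
  refine ⟨fun x₀ ρ hρ => (hball x₀ ρ hρ).trans_eq ?_, fb_le_of_measure_ball_le hball⟩
  rw [mul_assoc, ENNReal.ofReal_mul hC.le, mul_right_comm]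

/-- growth of the anisotropically dilated measure `μ_j = (T_j)_* μ`
(the key estimate in the proof of Lemma 3.2). -/
theorem stmt19 (n : ℕ) (hn : 2 ≤ n) (α : ℝ) (hα0 : 0 < α) (hα : α ≤ (n:ℝ)+1) :
    ∃ C : ℝ, 0 < C ∧
      ∀ j : ℕ, 1 ≤ j →
      ∀ μ : Measure (Ed (n+1)), IsAlphaDim (n+1) α μ →
      ∀ μj : Measure (Ed (n+1)), μj = Measure.map (Tdil n j) μ →
      (∀ x₀ : Ed (n+1), ∀ ρ : ℝ, 0 < ρ →
        μj (Metric.ball x₀ ρ) ≤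
          ENNReal.ofReal C * fb (n+1) α μ *
            ENNReal.ofReal
              (min ((2:ℝ) ^ (((n:ℝ)+1-2*α) * (j:ℝ)))
                (min ((2:ℝ) ^ ((1-α) * (j:ℝ))) 1) * ρ ^ α)) ∧
      fb (n+1) α μj ≤
        ENNReal.ofReal
          (C * min ((2:ℝ) ^ (((n:ℝ)+1-2*α) * (j:ℝ)))
            (min ((2:ℝ) ^ ((1-α) * (j:ℝ))) 1)) * fb (n+1) α μ :=
  stmt19_general n hn α

end
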